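/- Fix n ∈ ℕ, n ≥ 1. Let φ_n: ℕ → {0,1} send j to 0 if n - j is even and to 1 if n - j is odd. Define p_{n,s} ∈ ℚ(v) for s ∈ {1,…,n} recursively by p_{n,1} = v^{-φ_n(1)} and, for s > 1, p_{n,s} = (v^{ns} - v^{-ns})/(v^{φ_n(s)s}(v^n - v^{-n})) - Σ_{t=1}^{s-1} p_{n,t} [s choose t]_v v^{(φ_n(t)-φ_n(s))s}. Then in ℚ(v)[K,K⁻¹]: K^n - K^{-n} = (v^n - v^{-n}) Σ_{s=1}^{n} p_{n,s} k_s K^{φ_n(s)}, where k_s = (1/[s]_v!)∏_{j=0}^{s-1}(v^{-j}K - v^j K^{-1})/(v - v^{-1}). -/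

import Mathlib

/-!
Both sides are Laurent polynomials in `K` with exponents in `[-n, n]`, so it suffices to compare
them at the `2n + 2` points `K = ±v^a`, `0 ≤ a ≤ n`. There `k_s` becomes `(±1)^s [a choose s]_v`,
and since `s + φ_n(s) ≡ n (mod 2)` every term picks up the same sign `(±1)^n`. What remains is
`v^{an} - v^{-an} = (v^n - v^{-n}) Σ_s p_{n,s} [a choose s]_v v^{a φ_n(s)}`, which is the
recursion defining `p_{n,a}` itself, because `[a choose s]_v = 0` for `s > a`.
-/

open Finset

/-- Balanced quantum integer `[s]_v = (v^s - v^{-s})/(v - v⁻¹)`. -/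
noncomputable def qint {F : Type*} [Field F] (v : F) (s : ℕ) : F :=
  (v ^ (s : ℤ) - v ^ (-(s : ℤ))) / (v - v⁻¹)

/-- Balanced quantum factorial `[n]_v! = ∏_{s=1}^n [s]_v`. -/
noncomputable def qfact {F : Type*} [Field F] (v : F) (n : ℕ) : F :=
  ∏ s ∈ Finset.Icc 1 n, qint v s

/-- Balanced Gaussian binomial coefficient `[n choose k]_v`, defined by the
balanced Pascal recursion `[n+1,k]_v = v^{-(n+1-k)}[n,k-1]_v + v^k [n,k]_v`. -/
noncomputable def qbinom {F : Type*} [Field F] (v : F) : ℕ → ℕ → F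
  | _, 0 => 1
  | 0, _ + 1 => 0
  | n + 1, k + 1 =>
      v ^ (-((n : ℤ) - k)) * qbinom v n k + v ^ ((k : ℤ) + 1) * qbinom v n (k + 1)

/-- `φ_n(j) = 0` if `n - j` is even, `1` if odd. -/
def phi (n j : ℕ) : ℕ := if Even ((n : ℤ) - j) then 0 else 1

/-- The polynomials `p_{n,s} ∈ ℚ(v)` defined recursively. -/
noncomputable def pp (n : ℕ) : ℕ → RatFunc ℚ
  | 0 => 0
  | 1 => (RatFunc.X : RatFunc ℚ) ^ (-(phi n 1 : ℤ))
  | s + 2 =>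
      ((RatFunc.X : RatFunc ℚ) ^ ((n : ℤ) * (s + 2)) -
          (RatFunc.X : RatFunc ℚ) ^ (-((n : ℤ) * (s + 2)))) /
        ((RatFunc.X : RatFunc ℚ) ^ ((phi n (s + 2) : ℤ) * (s + 2)) *
          ((RatFunc.X : RatFunc ℚ) ^ (n : ℤ) - (RatFunc.X : RatFunc ℚ) ^ (-(n : ℤ)))) -
      ∑ t ∈ (Finset.Ico 1 (s + 2)).attach,
        pp n t.1 * qbinom (RatFunc.X : RatFunc ℚ) (s + 2) t.1 *
          (RatFunc.X : RatFunc ℚ) ^ (((phi n t.1 : ℤ) - (phi n (s + 2) : ℤ)) * (s + 2))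
  decreasing_by exact (Finset.mem_Ico.mp t.2).2

open TensorProduct

/-- The Laurent polynomial ring `ℚ(v)[K, K⁻¹]`, i.e. the group algebra of `ℤ` over `ℚ(v)`. -/
noncomputable abbrev H7 := MonoidAlgebra (RatFunc ℚ) (Multiplicative ℤ)

/-- The group-like element `K^n`. -/
noncomputable def Kz (n : ℤ) : H7 :=
  MonoidAlgebra.of (RatFunc ℚ) (Multiplicative ℤ) (Multiplicative.ofAdd n)

/-- `k_s = (1/[s]_v!) ∏_{j=0}^{s-1} (v^{-j} K - v^j K⁻¹)/(v - v⁻¹)`. -/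
noncomputable def k7 (s : ℕ) : H7 :=
  (qfact (RatFunc.X : RatFunc ℚ) s)⁻¹ •
    ∏ j ∈ Finset.range s,
      ((RatFunc.X : RatFunc ℚ) - (RatFunc.X : RatFunc ℚ)⁻¹)⁻¹ •
        ((RatFunc.X : RatFunc ℚ) ^ (-(j : ℤ)) • Kz 1 -
          (RatFunc.X : RatFunc ℚ) ^ (j : ℤ) • Kz (-1))

open scoped Polynomial

section QBinom

variable {F : Type*} [Field F]

theorem qbinom_eq_zero_of_lt (v : F) : ∀ {n k : ℕ}, n < k → qbinom v n k = 0
  | 0, _ + 1, _ => rfl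
  | n + 1, k + 1, h => by
    rw [qbinom, qbinom_eq_zero_of_lt v (by omega : n < k),
      qbinom_eq_zero_of_lt v (by omega : n < k + 1), mul_zero, mul_zero, add_zero]

theorem qbinom_self (v : F) : ∀ n : ℕ, qbinom v n n = 1
  | 0 => rfl
  | n + 1 => by rw [qbinom, qbinom_self v n, qbinom_eq_zero_of_lt v n.lt_succ_self]; simp

theorem zpow_neg_mul_sub_add_zpow_mul_sub {v : F} (hv : v ≠ 0) (a b : ℤ) :
    v ^ (-a) * (v ^ b - v ^ (-b)) + v ^ b * (v ^ a - v ^ (-a)) = v ^ (a + b) - v ^ (-(a + b)) := by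
  simp only [mul_sub, ← zpow_add₀ hv]
  ring_nf

/-- `[n choose k]_v [k]_v! = [n]_v [n-1]_v ⋯ [n-k+1]_v`, with both sides multiplied by
`(v - v⁻¹)^k`. -/
theorem qbinom_mul_prod {v : F} (hv : v ≠ 0) : ∀ n k : ℕ,
    qbinom v n k * ∏ m ∈ Icc 1 k, (v ^ (m : ℤ) - v ^ (-(m : ℤ))) =
      ∏ j ∈ range k, (v ^ ((n : ℤ) - j) - v ^ (-((n : ℤ) - j)))
  | n, 0 => by simp [qbinom]
  | 0, k + 1 => by simp [qbinom, Finset.prod_range_succ']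
  | n + 1, k + 1 => by
    have ih₁ := qbinom_mul_prod hv n k
    have ih₂ := qbinom_mul_prod hv n (k + 1)
    rw [Finset.prod_Icc_succ_top (by omega)] at ih₂ ⊢
    rw [Finset.prod_range_succ] at ih₂
    rw [Finset.prod_range_succ', qbinom]
    have hpascal := zpow_neg_mul_sub_add_zpow_mul_sub hv ((n : ℤ) - k) ((k : ℤ) + 1)
    rw [show (n : ℤ) - k + (k + 1) = n + 1 by ring] at hpascal
    push_cast at ih₂ ⊢
    simp only [add_sub_add_right_eq_sub, sub_zero]
    linear_combination (v ^ (-((n : ℤ) - k)) * (v ^ ((k : ℤ) + 1) - v ^ (-((k : ℤ) + 1)))) * ih₁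
      + v ^ ((k : ℤ) + 1) * ih₂
      + (∏ j ∈ range k, (v ^ ((n : ℤ) - j) - v ^ (-((n : ℤ) - j)))) * hpascal

theorem prod_zpow_sub_zpow_neg_eq_qfact_mul {v : F} (hv : v - v⁻¹ ≠ 0) (k : ℕ) :
    ∏ m ∈ Icc 1 k, (v ^ (m : ℤ) - v ^ (-(m : ℤ))) = qfact v k * (v - v⁻¹) ^ k := by
  rw [qfact, show (v - v⁻¹) ^ k = ∏ _m ∈ Icc 1 k, (v - v⁻¹) by simp, ← Finset.prod_mul_distrib]
  exact Finset.prod_congr rfl fun m _ => (div_mul_cancel₀ _ hv).symm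

end QBinom

theorem Int.cast_units_sq {F : Type*} [Ring F] (ε : ℤˣ) : ((ε : ℤ) : F) ^ 2 = 1 := by
  rw [← Int.cast_pow, Int.isUnit_sq ε.isUnit, Int.cast_one]

theorem intCast_units_mul_zpow_injective {F : Type*} [Field F] [CharZero F] {v : F}
    (hv : Function.Injective fun i : ℤ => v ^ i) :
    Function.Injective fun p : ℤ × ℤˣ => ((p.2 : ℤ) : F) * v ^ p.1 := by
  rintro ⟨a, ε⟩ ⟨b, η⟩ h
  have hv₀ : v ≠ 0 := fun h₀ => absurd (@hv 1 2 (by simp [h₀])) (by decide)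
  simp only at h
  have hsq : (((ε : ℤ) : F) * v ^ a) ^ 2 = (((η : ℤ) : F) * v ^ b) ^ 2 := by rw [h]
  rw [mul_pow, mul_pow, Int.cast_units_sq, Int.cast_units_sq, one_mul, one_mul,
    ← zpow_natCast, ← zpow_natCast, ← zpow_mul, ← zpow_mul] at hsq
  obtain rfl : a = b := by have := hv hsq; omega
  have hεη : ((ε : ℤ) : F) = η := mul_right_cancel₀ (zpow_ne_zero a hv₀) h
  rw [Prod.mk.injEq, Units.ext_iff]
  exact ⟨rfl, by exact_mod_cast hεη⟩

namespace RatFunc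

variable {K : Type*} [Field K]

theorem intDegree_X_zpow (i : ℤ) : intDegree ((X : RatFunc K) ^ i) = i := by
  have hnat (m : ℕ) : intDegree ((X : RatFunc K) ^ m) = m := by
    induction m with
    | zero => simp
    | succ m ih =>
      rw [pow_succ, intDegree_mul (pow_ne_zero _ X_ne_zero) X_ne_zero, ih, intDegree_X]
      push_cast; ring
  cases i with
  | ofNat m => simpa using hnat m
  | negSucc m => rw [zpow_negSucc, intDegree_inv, hnat, Int.negSucc_eq]; push_cast; ring

theorem X_zpow_injective : Function.Injective fun i : ℤ => (X : RatFunc K) ^ i := fun i j h => by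
  simpa only [intDegree_X_zpow] using congrArg intDegree h

theorem X_zpow_sub_X_zpow_neg_ne_zero {m : ℤ} (hm : m ≠ 0) :
    (X : RatFunc K) ^ m - X ^ (-m) ≠ 0 := fun h => hm (by
  have := X_zpow_injective (K := K) (sub_eq_zero.1 h)
  omega)

theorem X_sub_X_inv_ne_zero : (X : RatFunc K) - X⁻¹ ≠ 0 := by
  simpa using X_zpow_sub_X_zpow_neg_ne_zero (K := K) one_ne_zero

end RatFunc

section LaurentEvaluation

variable {F : Type*} [Field F]

noncomputable def laurentEval (u : Fˣ) : MonoidAlgebra F (Multiplicative ℤ) →ₐ[F] F :=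
  MonoidAlgebra.lift F F (Multiplicative ℤ) ((Units.coeHom F).comp (zpowersHom Fˣ u))

theorem laurentEval_of (u : Fˣ) (m : ℤ) :
    laurentEval u (MonoidAlgebra.of F _ (.ofAdd m)) = (u : F) ^ m := by
  simp [laurentEval, Units.val_zpow_eq_zpow_val]

theorem laurentEval_aeval (u : Fˣ) (p : F[X]) :
    laurentEval u (Polynomial.aeval (MonoidAlgebra.of F _ (.ofAdd 1)) p) = p.eval (u : F) := by
  rw [← Polynomial.aeval_algHom_apply, laurentEval_of, zpow_one, Polynomial.coe_aeval_eq_eval]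

theorem of_ofAdd_pow (m : ℕ) :
    MonoidAlgebra.of F (Multiplicative ℤ) (.ofAdd 1) ^ m =
      MonoidAlgebra.of F _ (.ofAdd (m : ℤ)) := by
  rw [← map_pow, ← ofAdd_nsmul, nsmul_one]

/-- Laurent polynomials in `K` with exponents in `[-N, N]`, encoded as those `x` for which
`x K^N` is a polynomial in `K` of degree at most `2N`. -/
noncomputable def laurentDegreeLE (N : ℕ) : Submodule F (MonoidAlgebra F (Multiplicative ℤ)) :=
  ((Polynomial.degreeLE F (2 * N : ℕ)).map
      (Polynomial.aeval (MonoidAlgebra.of F (Multiplicative ℤ) (.ofAdd 1))).toLinearMap).comap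
    (LinearMap.mulRight F (MonoidAlgebra.of F _ (.ofAdd (N : ℤ))))

theorem mem_laurentDegreeLE {N : ℕ} {x : MonoidAlgebra F (Multiplicative ℤ)} :
    x ∈ laurentDegreeLE N ↔ ∃ p : F[X], p.natDegree ≤ 2 * N ∧
      Polynomial.aeval (MonoidAlgebra.of F _ (.ofAdd 1)) p =
        x * MonoidAlgebra.of F _ (.ofAdd (N : ℤ)) := by
  simp [laurentDegreeLE, Polynomial.mem_degreeLE, Polynomial.natDegree_le_iff_degree_le]

theorem of_mem_laurentDegreeLE {N : ℕ} {m : ℤ} (h₁ : -(N : ℤ) ≤ m) (h₂ : m ≤ N) :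
    MonoidAlgebra.of F _ (.ofAdd m) ∈ laurentDegreeLE (F := F) N := by
  refine mem_laurentDegreeLE.2 ⟨.X ^ (m + N).toNat, by simp; omega, ?_⟩
  rw [map_pow, Polynomial.aeval_X, of_ofAdd_pow, ← map_mul, ← ofAdd_add,
    Int.toNat_of_nonneg (by omega)]

theorem mul_mem_laurentDegreeLE {N M : ℕ} {x y : MonoidAlgebra F (Multiplicative ℤ)}
    (hx : x ∈ laurentDegreeLE N) (hy : y ∈ laurentDegreeLE M) :
    x * y ∈ laurentDegreeLE (N + M) := by
  obtain ⟨p, hp, hpx⟩ := mem_laurentDegreeLE.1 hx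
  obtain ⟨q, hq, hqy⟩ := mem_laurentDegreeLE.1 hy
  refine mem_laurentDegreeLE.2 ⟨p * q, Polynomial.natDegree_mul_le.trans (by omega), ?_⟩
  rw [map_mul, hpx, hqy, Nat.cast_add, ofAdd_add, map_mul]
  ring

theorem laurentDegreeLE_mono {N M : ℕ} (h : N ≤ M) :
    laurentDegreeLE (F := F) N ≤ laurentDegreeLE M := by
  intro x hx
  obtain ⟨p, hp, hpx⟩ := mem_laurentDegreeLE.1 hx
  refine mem_laurentDegreeLE.2 ⟨p * .X ^ (M - N), Polynomial.natDegree_mul_le.trans ?_, ?_⟩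
  · simp; omega
  · rw [map_mul, hpx, map_pow, Polynomial.aeval_X, of_ofAdd_pow, mul_assoc, ← map_mul,
      ← ofAdd_add]
    congr 4
    omega

theorem prod_mem_laurentDegreeLE {ι : Type*} {s : Finset ι}
    {f : ι → MonoidAlgebra F (Multiplicative ℤ)} (h : ∀ i ∈ s, f i ∈ laurentDegreeLE 1) :
    ∏ i ∈ s, f i ∈ laurentDegreeLE s.card := by
  classical
  induction s using Finset.induction_on with
  | empty => exact of_mem_laurentDegreeLE (m := 0) le_rfl le_rfl
  | insert i s hi ih =>
    rw [Finset.prod_insert hi, Finset.card_insert_of_notMem hi, add_comm]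
    exact mul_mem_laurentDegreeLE (h i (Finset.mem_insert_self i s))
      (ih fun j hj => h j (Finset.mem_insert_of_mem hj))

theorem eq_zero_of_laurentEval_eq_zero {N : ℕ} {x : MonoidAlgebra F (Multiplicative ℤ)}
    (hx : x ∈ laurentDegreeLE N) {ι : Type*} [Fintype ι] {u : ι → Fˣ}
    (hu : Function.Injective u) (hcard : 2 * N < Fintype.card ι)
    (hev : ∀ i, laurentEval (u i) x = 0) : x = 0 := by
  obtain ⟨p, hp, hpx⟩ := mem_laurentDegreeLE.1 hx
  have hp0 : p = 0 := by
    refine Polynomial.eq_zero_of_natDegree_lt_card_of_eval_eq_zero p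
      (Units.val_injective.comp hu) (fun i => ?_) (by omega)
    rw [Function.comp_apply, ← laurentEval_aeval, hpx, map_mul, hev, zero_mul]
  calc x = x * MonoidAlgebra.of F _ (.ofAdd (N : ℤ)) * MonoidAlgebra.of F _ (.ofAdd (-(N : ℤ))) :=
        by rw [mul_assoc, ← map_mul, ← ofAdd_add, add_neg_cancel, ofAdd_zero, map_one, mul_one]
    _ = 0 := by rw [← hpx, hp0, map_zero, zero_mul]

end LaurentEvaluation

theorem exists_eq_add_phi_add_two_mul {n s : ℕ} (h : s ≤ n) : ∃ k, n = s + phi n s + 2 * k := by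
  unfold phi
  split_ifs with hpar
  · obtain ⟨r, hr⟩ := hpar
    exact ⟨(n - s) / 2, by omega⟩
  · obtain ⟨r, hr⟩ := Int.not_even_iff_odd.1 hpar
    exact ⟨(n - s) / 2, by omega⟩

section IndeterminateV

local notation "v" => (RatFunc.X : RatFunc ℚ)

theorem qfact_X_ne_zero (s : ℕ) : qfact v s ≠ 0 :=
  Finset.prod_ne_zero_iff.2 fun m hm => div_ne_zero
    (RatFunc.X_zpow_sub_X_zpow_neg_ne_zero (by have := (Finset.mem_Icc.1 hm).1; omega))
    RatFunc.X_sub_X_inv_ne_zero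

theorem qbinom_X_eq_div (a s : ℕ) :
    qbinom v a s = (∏ j ∈ range s, (v ^ ((a : ℤ) - j) - v ^ (-((a : ℤ) - j)))) /
      (qfact v s * (v - v⁻¹) ^ s) := by
  rw [eq_div_iff (mul_ne_zero (qfact_X_ne_zero s) (pow_ne_zero s RatFunc.X_sub_X_inv_ne_zero)),
    ← prod_zpow_sub_zpow_neg_eq_qfact_mul RatFunc.X_sub_X_inv_ne_zero,
    qbinom_mul_prod RatFunc.X_ne_zero]

theorem laurentEval_Kz (u : (RatFunc ℚ)ˣ) (m : ℤ) : laurentEval u (Kz m) = (u : RatFunc ℚ) ^ m :=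
  laurentEval_of u m

theorem laurentEval_k7 {u : (RatFunc ℚ)ˣ} {ε : RatFunc ℚ} (hε : ε ^ 2 = 1) {a : ℕ}
    (hu : (u : RatFunc ℚ) = ε * v ^ (a : ℤ)) (s : ℕ) :
    laurentEval u (k7 s) = ε ^ s * qbinom v a s := by
  have hv : v ≠ 0 := RatFunc.X_ne_zero
  have hu_inv : (u : RatFunc ℚ)⁻¹ = ε * v ^ (-(a : ℤ)) := by
    rw [hu, mul_inv, zpow_neg, inv_eq_of_mul_eq_one_right (by rw [← sq, hε])]
  have hfactor (j : ℕ) :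
      laurentEval u ((v - v⁻¹)⁻¹ • (v ^ (-(j : ℤ)) • Kz 1 - v ^ (j : ℤ) • Kz (-1))) =
        (v - v⁻¹)⁻¹ * (ε * (v ^ ((a : ℤ) - j) - v ^ (-((a : ℤ) - j)))) := by
    simp only [map_smul, map_sub, laurentEval_Kz, zpow_one, zpow_neg_one, smul_eq_mul]
    rw [hu_inv, hu, neg_sub, zpow_sub₀ hv, zpow_sub₀ hv, div_eq_mul_inv, div_eq_mul_inv,
      ← zpow_neg, ← zpow_neg]
    ring
  rw [k7, map_smul, map_prod, Finset.prod_congr rfl fun j _ => hfactor j, Finset.prod_mul_distrib,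
    Finset.prod_mul_distrib, Finset.prod_const, Finset.prod_const, Finset.card_range, smul_eq_mul,
    qbinom_X_eq_div, div_eq_mul_inv, mul_inv, inv_pow]
  ring

theorem laurentEval_Kz_natCast {u : (RatFunc ℚ)ˣ} {ε : RatFunc ℚ} {a : ℕ}
    (hu : (u : RatFunc ℚ) = ε * v ^ (a : ℤ)) (m : ℕ) :
    laurentEval u (Kz m) = ε ^ m * v ^ ((a : ℤ) * m) := by
  rw [laurentEval_Kz, hu, zpow_natCast, mul_pow, ← zpow_natCast (v ^ _), ← zpow_mul]

theorem laurentEval_Kz_neg_natCast {u : (RatFunc ℚ)ˣ} {ε : RatFunc ℚ} (hε : ε ^ 2 = 1) {a : ℕ}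
    (hu : (u : RatFunc ℚ) = ε * v ^ (a : ℤ)) (m : ℕ) :
    laurentEval u (Kz (-(m : ℤ))) = ε ^ m * v ^ (-((a : ℤ) * m)) := by
  have hεm : (ε ^ m)⁻¹ = ε ^ m :=
    inv_eq_of_mul_eq_one_right (by rw [← mul_pow, ← sq, hε, one_pow])
  rw [laurentEval_Kz, zpow_neg, zpow_natCast, hu, mul_pow, mul_inv, hεm, ← zpow_natCast (v ^ _),
    ← zpow_mul, zpow_neg]

/-- The recursion defining `p_{n,s}`, multiplied out. -/
theorem sum_pp_mul_qbinom (n s : ℕ) :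
    (v ^ (n : ℤ) - v ^ (-(n : ℤ))) * ∑ t ∈ Icc 1 s, pp n t * qbinom v s t * v ^ ((s : ℤ) * phi n t)
      = v ^ ((s : ℤ) * n) - v ^ (-((s : ℤ) * n)) := by
  rcases Nat.eq_zero_or_pos n with rfl | hn
  · simp
  have hv : v ≠ 0 := RatFunc.X_ne_zero
  have hD : v ^ (n : ℤ) - v ^ (-(n : ℤ)) ≠ 0 :=
    RatFunc.X_zpow_sub_X_zpow_neg_ne_zero (by omega)
  match s with
  | 0 => simp
  | 1 =>
    rw [Finset.Icc_self, Finset.sum_singleton, pp, qbinom_self]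
    simp [hv]
  | s + 2 =>
    rw [Finset.sum_Icc_succ_top (by omega), pp, qbinom_self, Finset.sum_attach _
      (fun t => pp n t * qbinom v (s + 2) t * v ^ (((phi n t : ℤ) - phi n (s + 2)) * (s + 2))),
      show Ico 1 (s + 2) = Icc 1 (s + 1) from Finset.Ico_add_one_right_eq_Icc 1 (s + 1),
      show s + 1 + 1 = s + 2 from rfl]
    have hshift : ∑ t ∈ Icc 1 (s + 1), pp n t * qbinom v (s + 2) t *
          v ^ (((phi n t : ℤ) - phi n (s + 2)) * (s + 2)) =
        (∑ t ∈ Icc 1 (s + 1), pp n t * qbinom v (s + 2) t * v ^ (((s + 2 : ℕ) : ℤ) * phi n t)) *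
          (v ^ ((phi n (s + 2) : ℤ) * (s + 2)))⁻¹ := by
      rw [Finset.sum_mul]
      refine Finset.sum_congr rfl fun t _ => ?_
      rw [← zpow_neg, mul_assoc _ (v ^ _), ← zpow_add₀ hv]
      congr 2
      push_cast
      ring
    rw [hshift, show ((s + 2 : ℕ) : ℤ) * phi n (s + 2) = (phi n (s + 2) : ℤ) * (s + 2) by
      push_cast; ring]
    have hY : v ^ ((phi n (s + 2) : ℤ) * (s + 2)) ≠ 0 := zpow_ne_zero _ hv
    generalize v ^ ((phi n (s + 2) : ℤ) * (s + 2)) = Y at hY ⊢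
    push_cast
    rw [mul_comm ((s : ℤ) + 2) n]
    field_simp
    ring

theorem sum_pp_mul_qbinom_of_le {n a : ℕ} (ha : a ≤ n) :
    (v ^ (n : ℤ) - v ^ (-(n : ℤ))) * ∑ s ∈ Icc 1 n, pp n s * qbinom v a s * v ^ ((a : ℤ) * phi n s)
      = v ^ ((a : ℤ) * n) - v ^ (-((a : ℤ) * n)) := by
  rw [← sum_pp_mul_qbinom n a, ← Finset.sum_subset (Finset.Icc_subset_Icc_right ha)]
  intro s hs hs'
  rw [qbinom_eq_zero_of_lt v (by simp only [Finset.mem_Icc] at hs hs'; omega), mul_zero, zero_mul]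

theorem Kz_mem_laurentDegreeLE {N : ℕ} {m : ℤ} (h₁ : -(N : ℤ) ≤ m) (h₂ : m ≤ N) :
    Kz m ∈ laurentDegreeLE N :=
  of_mem_laurentDegreeLE h₁ h₂

theorem k7_mem_laurentDegreeLE (s : ℕ) : k7 s ∈ laurentDegreeLE s := by
  have hfactor (j : ℕ) : (v - v⁻¹)⁻¹ • (v ^ (-(j : ℤ)) • Kz 1 - v ^ (j : ℤ) • Kz (-1)) ∈
      laurentDegreeLE 1 :=
    Submodule.smul_mem _ _ (sub_mem
      (Submodule.smul_mem _ _ (Kz_mem_laurentDegreeLE (by norm_num) le_rfl))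
      (Submodule.smul_mem _ _ (Kz_mem_laurentDegreeLE le_rfl (by norm_num))))
  have hprod := prod_mem_laurentDegreeLE fun j (_ : j ∈ range s) => hfactor j
  rw [Finset.card_range] at hprod
  exact Submodule.smul_mem _ _ hprod

theorem sum_pp_smul_mem_laurentDegreeLE (n : ℕ) :
    ∑ s ∈ Icc 1 n, pp n s • (k7 s * Kz (phi n s)) ∈ laurentDegreeLE n := by
  refine Submodule.sum_mem _ fun s hs => Submodule.smul_mem _ _ ?_
  obtain ⟨k, hk⟩ := exists_eq_add_phi_add_two_mul (Finset.mem_Icc.1 hs).2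
  exact laurentDegreeLE_mono (by omega) (mul_mem_laurentDegreeLE (k7_mem_laurentDegreeLE s)
    (Kz_mem_laurentDegreeLE (by omega) le_rfl))

theorem laurentEval_Kz_sub_Kz_neg {n a : ℕ} (ha : a ≤ n) {u : (RatFunc ℚ)ˣ} {ε : RatFunc ℚ}
    (hε : ε ^ 2 = 1) (hu : (u : RatFunc ℚ) = ε * v ^ (a : ℤ)) :
    laurentEval u (Kz n - Kz (-(n : ℤ))) = laurentEval u ((v ^ (n : ℤ) - v ^ (-(n : ℤ))) •
      ∑ s ∈ Icc 1 n, pp n s • (k7 s * Kz (phi n s))) := by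
  have hsign (s : ℕ) (hs : s ∈ Icc 1 n) : ε ^ s * ε ^ phi n s = ε ^ n := by
    obtain ⟨k, hk⟩ := exists_eq_add_phi_add_two_mul (Finset.mem_Icc.1 hs).2
    conv_rhs => rw [hk, pow_add, pow_mul, hε, one_pow, mul_one, pow_add]
  have hterm (s : ℕ) (hs : s ∈ Icc 1 n) : laurentEval u (pp n s • (k7 s * Kz (phi n s))) =
      ε ^ n * (pp n s * qbinom v a s * v ^ ((a : ℤ) * phi n s)) := by
    rw [map_smul, map_mul, laurentEval_k7 hε hu, laurentEval_Kz_natCast hu, smul_eq_mul,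
      ← hsign s hs]
    ring
  rw [map_smul, map_sum, Finset.sum_congr rfl hterm, ← Finset.mul_sum, smul_eq_mul, map_sub,
    laurentEval_Kz_natCast hu, laurentEval_Kz_neg_natCast hε hu]
  linear_combination -ε ^ n * sum_pp_mul_qbinom_of_le ha

noncomputable def signedXPow (n : ℕ) (p : Fin (n + 1) × ℤˣ) : (RatFunc ℚ)ˣ :=
  Units.mk0 (((p.2 : ℤ) : RatFunc ℚ) * RatFunc.X ^ ((p.1 : ℕ) : ℤ))
    (mul_ne_zero (by simp) (zpow_ne_zero _ RatFunc.X_ne_zero))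

theorem signedXPow_injective (n : ℕ) : Function.Injective (signedXPow n) := by
  intro p q h
  have := intCast_units_mul_zpow_injective RatFunc.X_zpow_injective
    (a₁ := (((p.1 : ℕ) : ℤ), p.2)) (a₂ := (((q.1 : ℕ) : ℤ), q.2)) (Units.ext_iff.1 h)
  simp only [Prod.mk.injEq, Nat.cast_inj, Fin.val_inj] at this
  exact Prod.ext this.1 this.2

end IndeterminateV

theorem stmt_7_general (n : ℕ) :
    Kz n - Kz (-(n : ℤ)) =
      ((RatFunc.X : RatFunc ℚ) ^ (n : ℤ) - (RatFunc.X : RatFunc ℚ) ^ (-(n : ℤ))) •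
        ∑ s ∈ Finset.Icc 1 n, pp n s • (k7 s * Kz (phi n s)) := by
  rw [← sub_eq_zero]
  refine eq_zero_of_laurentEval_eq_zero (N := n) ?_ (signedXPow_injective n) (by simp; omega) ?_
  · exact sub_mem (sub_mem (Kz_mem_laurentDegreeLE (by omega) (by omega))
      (Kz_mem_laurentDegreeLE le_rfl (by omega)))
      (Submodule.smul_mem _ _ (sum_pp_smul_mem_laurentDegreeLE n))
  · rintro ⟨a, ε⟩
    rw [map_sub, sub_eq_zero]
    exact laurentEval_Kz_sub_Kz_neg a.is_le (Int.cast_units_sq ε) rfl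

/-- `K^n - K^{-n} = (v^n - v^{-n}) Σ_{s=1}^n p_{n,s} k_s K^{φ_n(s)}`. -/
theorem stmt_7 (n : ℕ) (hn : 1 ≤ n) :
    Kz n - Kz (-(n : ℤ)) =
      ((RatFunc.X : RatFunc ℚ) ^ (n : ℤ) - (RatFunc.X : RatFunc ℚ) ^ (-(n : ℤ))) •
        ∑ s ∈ Finset.Icc 1 n, pp n s • (k7 s * Kz (phi n s)) :=
  stmt_7_general n
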